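/- arXiv:2103.14665 — 6 statements merged into one kernel-verified Lean document; each statement's English description precedes it below -/
import Mathlib

section
/- For every u ∈ ℝ³ with u·n > 0, the Cercignani–Lampis scattering kernel is a probability density on the incoming velocities: ∫_{{v ∈ ℝ³ : v·n < 0}} R(u→v) dv = 1 (the integral is with respect to three-dimensional Lebesgue measure). -/
/-!
In an orthonormal frame whose first vector is `n`, the kernel factors into a function of the
normal component `v⊥` alone times two Gaussian densities, with means `(1 - r∥) uᵢ` and variance
`T r∥ (2 - r∥)`, in the tangential components. The Gaussian factors integrate to one. Since `I₀` is
even, the reflection `v⊥ ↦ -v⊥` turns the normal factor into the density of a Rice distribution,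
whose normalisation comes from writing a shifted two-dimensional Gaussian in polar coordinates.
-/

open MeasureTheory

/-- The modified Bessel function `I₀(y) = (1/π) ∫₀^π e^{y cos φ} dφ`. -/
noncomputable def besselI0 (y : ℝ) : ℝ :=
  (1 / Real.pi) * ∫ φ in (0:ℝ)..Real.pi, Real.exp (y * Real.cos φ)

/-- The Cercignani–Lampis scattering kernel `R(u → v)` with unit normal `n`,
wall temperature `T` and accommodation coefficients `rperp`, `rpar`. -/
noncomputable def clKernel (n : EuclideanSpace ℝ (Fin 3)) (T rperp rpar : ℝ)
    (u v : EuclideanSpace ℝ (Fin 3)) : ℝ :=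
  (2 / (Real.pi * rperp * rpar * (2 - rpar))) * (|(inner ℝ n v : ℝ)| / (2 * T) ^ 2) *
    Real.exp (-(1 / (2 * T)) *
      (((inner ℝ v n : ℝ) ^ 2 + (1 - rperp) * (inner ℝ u n : ℝ) ^ 2) / rperp +
        ‖(v - (inner ℝ v n : ℝ) • n) - (1 - rpar) • (u - (inner ℝ u n : ℝ) • n)‖ ^ 2 /
          (rpar * (2 - rpar)))) *
    besselI0 (Real.sqrt (1 - rperp) * (inner ℝ v n : ℝ) * (inner ℝ u n : ℝ) / (T * rperp))

open Real Set ProbabilityTheory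
open scoped NNReal

theorem besselI0_neg (y : ℝ) : besselI0 (-y) = besselI0 y := by
  have h := intervalIntegral.integral_comp_sub_left (a := 0) (b := π) (fun φ ↦ exp (y * cos φ)) π
  simp only [sub_zero, sub_self, cos_pi_sub] at h
  simp only [besselI0, ← h, neg_mul, mul_neg]

theorem integral_Ioo_exp_mul_cos (c : ℝ) :
    ∫ θ in Ioo (-π) π, exp (c * cos θ) = 2 * π * besselI0 c := by
  have hc : Continuous fun θ ↦ exp (c * cos θ) := by fun_prop
  have h_symm : ∫ θ in -π..0, exp (c * cos θ) = ∫ θ in 0..π, exp (c * cos θ) := by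
    simpa using (intervalIntegral.integral_comp_neg (a := 0) (b := π) fun θ ↦ exp (c * cos θ)).symm
  rw [← integral_Ioc_eq_integral_Ioo, ← intervalIntegral.integral_of_le (by linarith [pi_pos]),
    ← intervalIntegral.integral_add_adjacent_intervals (b := 0) (hc.intervalIntegrable _ _)
      (hc.intervalIntegrable _ _), h_symm, besselI0]
  field_simp
  ring

theorem integrableOn_comp_polarCoord_symm {E : Type*} [NormedAddCommGroup E] [NormedSpace ℝ E]
    {f : ℝ × ℝ → E} (hf : Integrable f) :
    IntegrableOn (fun p ↦ p.1 • f (polarCoord.symm p)) polarCoord.target := by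
  have h := (integrableOn_image_iff_integrableOn_abs_det_fderiv_smul volume
    polarCoord.open_target.measurableSet
    (fun p _ ↦ (hasFDerivAt_polarCoord_symm p).hasFDerivWithinAt) polarCoord.symm.injOn f).1
  rw [polarCoord.symm_image_target_eq_source] at h
  refine (h hf.integrableOn).congr_fun (fun p hp ↦ ?_) polarCoord.open_target.measurableSet
  simp only [det_fderivPolarCoordSymm, abs_of_pos (show 0 < p.1 from hp.1)]

-- The cross term `-2 r a cos θ` of `(r cos θ - a)²` leaves `exp (r a cos θ / s)`, whose integral
-- over `θ` is `2π I₀ (r a / s)`.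
theorem gaussianPDFReal_mul_comp_polarCoord_symm (a : ℝ) (s : ℝ≥0) (p : ℝ × ℝ) :
    gaussianPDFReal a s (polarCoord.symm p).1 * gaussianPDFReal 0 s (polarCoord.symm p).2
      = (2 * π * s)⁻¹ * (exp (-(p.1 ^ 2 + a ^ 2) / (2 * s)) * exp (p.1 * a / s * cos p.2)) := by
  obtain ⟨r, θ⟩ := p
  have h_exp : -(r * cos θ - a) ^ 2 / (2 * s) + -(r * sin θ - 0) ^ 2 / (2 * s)
      = -(r ^ 2 + a ^ 2) / (2 * s) + r * a / s * cos θ := by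
    linear_combination (-r ^ 2 / (2 * s)) * sin_sq_add_cos_sq θ
  have h_norm : (√(2 * π * s))⁻¹ * (√(2 * π * s))⁻¹ = (2 * π * s)⁻¹ := by
    rw [← mul_inv, mul_self_sqrt (by positivity)]
  simp only [gaussianPDFReal, polarCoord_symm_apply]
  rw [mul_mul_mul_comm, ← exp_add, h_exp, exp_add, h_norm]

-- The normalisation of the Rice distribution.
theorem integral_Ioi_mul_exp_mul_besselI0 {σ : ℝ} (hσ : 0 < σ) (a : ℝ) :
    ∫ r in Ioi 0, r * exp (-(r ^ 2 + a ^ 2) / (2 * σ)) * besselI0 (r * a / σ) = σ := by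
  set s : ℝ≥0 := ⟨σ, hσ.le⟩
  have hs : s ≠ 0 := ne_of_gt hσ
  have hs_coe : (s : ℝ) = σ := rfl
  set G : ℝ × ℝ → ℝ := fun p ↦ gaussianPDFReal a s p.1 * gaussianPDFReal 0 s p.2
  have hG : ∫ p, G p = 1 := by
    rw [Measure.volume_eq_prod, integral_prod_mul (gaussianPDFReal a s) (gaussianPDFReal 0 s),
      integral_gaussianPDFReal_eq_one a hs, integral_gaussianPDFReal_eq_one 0 hs, one_mul]
  have h_int := integrableOn_comp_polarCoord_symm (f := G)
    ((integrable_gaussianPDFReal a s).mul_prod (integrable_gaussianPDFReal 0 s))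
  rw [← integral_comp_polarCoord_symm] at hG
  simp only [G, smul_eq_mul, gaussianPDFReal_mul_comp_polarCoord_symm, hs_coe, polarCoord_target,
    IntegrableOn, Measure.volume_eq_prod, ← Measure.prod_restrict] at h_int hG
  simp_rw [integral_prod _ h_int, integral_const_mul, integral_Ioo_exp_mul_cos] at hG
  have h_eq : ∫ r in Ioi 0, r * ((2 * π * σ)⁻¹ * (exp (-(r ^ 2 + a ^ 2) / (2 * σ))
        * (2 * π * besselI0 (r * a / σ))))
      = σ⁻¹ * ∫ r in Ioi 0, r * exp (-(r ^ 2 + a ^ 2) / (2 * σ)) * besselI0 (r * a / σ) := by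
    rw [← integral_const_mul]
    congr 1 with r
    field_simp
  rwa [h_eq, inv_mul_eq_one₀ hσ.ne', eq_comm] at hG

theorem integral_Iio_abs_mul_exp_mul_besselI0 {σ : ℝ} (hσ : 0 < σ) (a : ℝ) :
    ∫ x in Iio 0, |x| * exp (-(x ^ 2 + a ^ 2) / (2 * σ)) * besselI0 (x * a / σ) = σ := by
  rw [← integral_Iic_eq_integral_Iio, ← neg_zero, ← integral_comp_neg_Ioi]
  refine (setIntegral_congr_fun measurableSet_Ioi fun r (hr : 0 < r) ↦ ?_).trans
    (integral_Ioi_mul_exp_mul_besselI0 hσ a)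
  simp only [abs_neg, abs_of_pos hr, neg_sq, neg_mul, neg_div, besselI0_neg]

noncomputable def clNormalKernel (T rperp uperp vperp : ℝ) : ℝ :=
  |vperp| / (T * rperp) * exp (-(vperp ^ 2 + (1 - rperp) * uperp ^ 2) / (2 * (T * rperp)))
    * besselI0 (√(1 - rperp) * vperp * uperp / (T * rperp))

theorem integral_Iio_clNormalKernel {T rperp : ℝ} (hT : 0 < T) (hrperp0 : 0 < rperp)
    (hrperp1 : rperp ≤ 1) (uperp : ℝ) :
    ∫ vperp in Iio 0, clNormalKernel T rperp uperp vperp = 1 := by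
  have hσ : 0 < T * rperp := mul_pos hT hrperp0
  have h_sq : (1 - rperp) * uperp ^ 2 = (√(1 - rperp) * uperp) ^ 2 := by
    rw [mul_pow, sq_sqrt (sub_nonneg.2 hrperp1)]
  have h_eq : ∀ vperp, clNormalKernel T rperp uperp vperp = (T * rperp)⁻¹
      * (|vperp| * exp (-(vperp ^ 2 + (√(1 - rperp) * uperp) ^ 2) / (2 * (T * rperp)))
        * besselI0 (vperp * (√(1 - rperp) * uperp) / (T * rperp))) := fun vperp ↦ by
    rw [clNormalKernel, h_sq]
    ring_nf
  simp_rw [h_eq, integral_const_mul, integral_Iio_abs_mul_exp_mul_besselI0 hσ,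
    inv_mul_cancel₀ hσ.ne']

theorem OrthonormalBasis.exists_apply_eq {ι E : Type*} [Fintype ι] [NormedAddCommGroup E]
    [InnerProductSpace ℝ E] [FiniteDimensional ℝ E] (hι : Module.finrank ℝ E = Fintype.card ι)
    (i : ι) {n : E} (hn : ‖n‖ = 1) : ∃ b : OrthonormalBasis ι ℝ E, b i = n := by
  have h : Orthonormal ℝ (({i} : Set ι).domRestrict fun _ ↦ n) := by
    simp [hn]
  obtain ⟨b, hb⟩ := h.exists_orthonormalBasis_extension_of_card_eq hι
  exact ⟨b, hb i rfl⟩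

theorem OrthonormalBasis.inner_repr_symm_apply {ι E : Type*} [Fintype ι] [NormedAddCommGroup E]
    [InnerProductSpace ℝ E] (b : OrthonormalBasis ι ℝ E) (x : EuclideanSpace ℝ ι) (i : ι) :
    inner ℝ (b.repr.symm x) (b i) = x i := by
  rw [real_inner_comm, ← b.repr_apply_apply, b.repr.apply_symm_apply]

theorem OrthonormalBasis.norm_sub_inner_smul_zero_sq {E : Type*} [NormedAddCommGroup E]
    [InnerProductSpace ℝ E] {d : ℕ} (b : OrthonormalBasis (Fin (d + 1)) ℝ E) (w : E) :
    ‖w - inner ℝ w (b 0) • b 0‖ ^ 2 = ∑ i : Fin d, b.repr w i.succ ^ 2 := by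
  have h_repr : ∀ i, b.repr (w - inner ℝ w (b 0) • b 0) i = if i = 0 then 0 else b.repr w i := by
    intro i
    simp only [map_sub, map_smul, b.repr_self, PiLp.sub_apply, PiLp.smul_apply, PiLp.single_apply]
    split_ifs with hi
    · simp [hi, b.repr_apply_apply, real_inner_comm]
    · simp
  rw [← b.repr.norm_map, EuclideanSpace.norm_sq_eq, Fin.sum_univ_succ]
  simp only [h_repr, ↓reduceIte, Fin.succ_ne_zero, norm_zero, Real.norm_eq_abs, sq_abs]
  ring

theorem EuclideanSpace.integral_fintype_prod_eq_prod {ι : Type*} [Fintype ι] (f : ι → ℝ → ℝ) :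
    ∫ x : EuclideanSpace ℝ ι, ∏ i, f i (x i) = ∏ i, ∫ t, f i t := by
  rw [← (EuclideanSpace.volume_preserving_symm_measurableEquiv_toLp ι).symm.integral_comp']
  exact integral_fintype_prod_volume_eq_prod f

theorem EuclideanSpace.setIntegral_fin_three_mul {s : Set ℝ} (hs : MeasurableSet s)
    (f g h : ℝ → ℝ) :
    ∫ x in {x : EuclideanSpace ℝ (Fin 3) | x 0 ∈ s}, f (x 0) * g (x 1) * h (x 2)
      = (∫ t in s, f t) * (∫ t, g t) * ∫ t, h t := by
  have hs' : MeasurableSet {x : EuclideanSpace ℝ (Fin 3) | x 0 ∈ s} :=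
    hs.preimage ((measurable_pi_apply 0).comp (PiLp.continuous_ofLp 2 _).measurable)
  have h_prod : ∀ x : EuclideanSpace ℝ (Fin 3),
      {x | x 0 ∈ s}.indicator (fun x ↦ f (x 0) * g (x 1) * h (x 2)) x
        = ∏ i, ![s.indicator f, g, h] i (x i) := by
    intro x
    by_cases hx : x 0 ∈ s <;> simp [Fin.prod_univ_three, hx]
  rw [← integral_indicator hs', funext h_prod, EuclideanSpace.integral_fintype_prod_eq_prod,
    Fin.prod_univ_three, ← integral_indicator hs]
  rfl

theorem clKernel_repr_symm_eq_mul (b : OrthonormalBasis (Fin 3) ℝ (EuclideanSpace ℝ (Fin 3)))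
    (T rperp rpar : ℝ) {v : ℝ≥0} (hv : (v : ℝ) = T * (rpar * (2 - rpar)))
    (u x : EuclideanSpace ℝ (Fin 3)) :
    clKernel (b 0) T rperp rpar u (b.repr.symm x)
      = clNormalKernel T rperp (b.repr u 0) (x 0)
        * gaussianPDFReal ((1 - rpar) * b.repr u 1) v (x 1)
        * gaussianPDFReal ((1 - rpar) * b.repr u 2) v (x 2) := by
  have h_par : (b.repr.symm x - inner ℝ (b.repr.symm x) (b 0) • b 0)
        - (1 - rpar) • (u - inner ℝ u (b 0) • b 0)
      = b.repr.symm x - (1 - rpar) • u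
        - inner ℝ (b.repr.symm x - (1 - rpar) • u) (b 0) • b 0 := by
    rw [inner_sub_left, real_inner_smul_left]
    module
  have h_perp : inner ℝ u (b 0) = b.repr u 0 := by
    rw [real_inner_comm, b.repr_apply_apply]
  have h_norm : (√(2 * π * v))⁻¹ * (√(2 * π * v))⁻¹ = (2 * π * v)⁻¹ := by
    rw [← mul_inv, mul_self_sqrt (by positivity)]
  rw [clKernel, h_par, b.norm_sub_inner_smul_zero_sq, real_inner_comm _ (b 0),
    b.inner_repr_symm_apply, h_perp, Fin.sum_univ_two, mul_assoc (π * rperp)]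
  simp only [map_sub, map_smul, b.repr.apply_symm_apply, PiLp.sub_apply, PiLp.smul_apply,
    smul_eq_mul, Fin.succ_zero_eq_one, Fin.succ_one_eq_two, clNormalKernel, gaussianPDFReal]
  -- `ring` cannot factor the inverse of the non-monomial `rpar * (2 - rpar)`: make it an atom.
  generalize rpar * (2 - rpar) = ρ at hv ⊢
  rw [hv] at h_norm ⊢
  set p := x 0
  set q := b.repr u 0
  set y₁ := x 1 - (1 - rpar) * b.repr u 1
  set y₂ := x 2 - (1 - rpar) * b.repr u 2
  have h_exp : -(1 / (2 * T)) * ((p ^ 2 + (1 - rperp) * q ^ 2) / rperp + (y₁ ^ 2 + y₂ ^ 2) / ρ)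
      = -(p ^ 2 + (1 - rperp) * q ^ 2) / (2 * (T * rperp))
        + -y₁ ^ 2 / (2 * (T * ρ)) + -y₂ ^ 2 / (2 * (T * ρ)) := by
    ring
  have h_const : 2 / (π * rperp * ρ) * (|p| / (2 * T) ^ 2)
      = |p| / (T * rperp) * (2 * π * (T * ρ))⁻¹ := by
    ring
  rw [h_exp, exp_add, exp_add, h_const, ← h_norm]
  ring

theorem clKernel_integral_eq_one_general
    (n : EuclideanSpace ℝ (Fin 3)) (hn : ‖n‖ = 1)
    (T : ℝ) (hT : 0 < T)
    (rperp rpar : ℝ) (hrperp0 : 0 < rperp) (hrperp1 : rperp ≤ 1)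
    (hrpar0 : 0 < rpar) (hrpar2 : rpar < 2)
    (u : EuclideanSpace ℝ (Fin 3)) :
    ∫ v in {v : EuclideanSpace ℝ (Fin 3) | (inner ℝ v n : ℝ) < 0},
      clKernel n T rperp rpar u v = 1 := by
  obtain ⟨b, rfl⟩ := OrthonormalBasis.exists_apply_eq finrank_euclideanSpace 0 hn
  have h_half : b.repr.symm ⁻¹' {v | inner ℝ v (b 0) < 0} = {x | x 0 ∈ Iio 0} := by
    ext x
    simp [b.inner_repr_symm_apply]
  have hσ_par : 0 < T * (rpar * (2 - rpar)) := mul_pos hT (mul_pos hrpar0 (sub_pos.2 hrpar2))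
  set σ_par : ℝ≥0 := ⟨T * (rpar * (2 - rpar)), hσ_par.le⟩
  have hσ_par_ne : σ_par ≠ 0 := ne_of_gt hσ_par
  rw [← b.measurePreserving_repr_symm.setIntegral_preimage_emb
    b.repr.symm.toHomeomorph.measurableEmbedding, h_half]
  simp_rw [clKernel_repr_symm_eq_mul b T rperp rpar (v := σ_par) rfl u]
  rw [EuclideanSpace.setIntegral_fin_three_mul measurableSet_Iio,
    integral_Iio_clNormalKernel hT hrperp0 hrperp1, integral_gaussianPDFReal_eq_one _ hσ_par_ne,
    integral_gaussianPDFReal_eq_one _ hσ_par_ne, one_mul, one_mul]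

/-- The Cercignani–Lampis kernel is a probability density on incoming velocities:
for every `u` with `u ⬝ n > 0`, `∫_{v ⬝ n < 0} R(u → v) dv = 1`. -/
theorem clKernel_integral_eq_one
    (n : EuclideanSpace ℝ (Fin 3)) (hn : ‖n‖ = 1)
    (T : ℝ) (hT : 0 < T)
    (rperp rpar : ℝ) (hrperp0 : 0 < rperp) (hrperp1 : rperp ≤ 1)
    (hrpar0 : 0 < rpar) (hrpar2 : rpar < 2)
    (u : EuclideanSpace ℝ (Fin 3)) (hu : 0 < (inner ℝ u n : ℝ)) :
    ∫ v in {v : EuclideanSpace ℝ (Fin 3) | (inner ℝ v n : ℝ) < 0},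
      clKernel n T rperp rpar u v = 1 :=
  clKernel_integral_eq_one_general n hn T hT rperp rpar hrperp0 hrperp1 hrpar0 hrpar2 u
end

section
/- The Cercignani–Lampis kernel satisfies the reciprocity identity: for all u, v ∈ ℝ³ with u·n > 0 and v·n < 0, R(u→v) = R(−v→−u) · exp( −(|v|² − |u|²)/(2T) ) · (|n·v| / |n·u|). (Here −v satisfies (−v)·n > 0 and −u satisfies (−u)·n < 0, so R(−v→−u) is defined by the same formula.) -/
open MeasureTheory

/-!
Write `a = u·n`, `b = v·n` and `p`, `q` for the tangential parts of `u`, `v`. Swapping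
`(u, v) ↦ (-v, -u)` leaves the Bessel factor unchanged and replaces `|b|` by `|a|` in the
prefactor; in the exponent it exchanges `a ↔ b` and `p ↔ q`. The normal part of the exponent
changes by `b² - a²`, and since `‖q - s p‖² - ‖p - s q‖² = (1 - s²)(‖q‖² - ‖p‖²)` with
`1 - s² = r∥(2 - r∥)` for `s = 1 - r∥`, the tangential part changes by `‖q‖² - ‖p‖²`.
Together the exponent changes by `‖v‖² - ‖u‖²`, the kinetic energy difference.
-/

open RealInnerProductSpace

section InnerProductSpace

variable {E : Type*} [NormedAddCommGroup E] [InnerProductSpace ℝ E]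

theorem norm_sub_inner_smul_sq {n : E} (hn : ‖n‖ = 1) (w : E) :
    ‖w - ⟪w, n⟫ • n‖ ^ 2 = ‖w‖ ^ 2 - ⟪w, n⟫ ^ 2 := by
  rw [norm_sub_sq_real, real_inner_smul_right, norm_smul, Real.norm_eq_abs, hn, mul_one, sq_abs]
  ring

theorem norm_sub_smul_sq_sub_norm_sub_smul_sq (x y : E) (r : ℝ) :
    ‖x - r • y‖ ^ 2 - ‖y - r • x‖ ^ 2 = (1 - r ^ 2) * (‖x‖ ^ 2 - ‖y‖ ^ 2) := by
  simp only [norm_sub_sq_real, real_inner_smul_right, norm_smul, Real.norm_eq_abs, mul_pow,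
    sq_abs, real_inner_comm y x]
  ring

noncomputable def clExponent (n : E) (rperp rpar : ℝ) (u v : E) : ℝ :=
  (⟪v, n⟫ ^ 2 + (1 - rperp) * ⟪u, n⟫ ^ 2) / rperp +
    ‖(v - ⟪v, n⟫ • n) - (1 - rpar) • (u - ⟪u, n⟫ • n)‖ ^ 2 / (rpar * (2 - rpar))

theorem clExponent_neg (n : E) (rperp rpar : ℝ) (u v : E) :
    clExponent n rperp rpar (-u) (-v) = clExponent n rperp rpar u v := by
  have tangential (w : E) : -w - ⟪-w, n⟫ • n = -(w - ⟪w, n⟫ • n) := by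
    rw [inner_neg_left, neg_smul, sub_neg_eq_add, neg_sub', sub_neg_eq_add]
  rw [clExponent, tangential, tangential, smul_neg, sub_neg_eq_add, neg_add_eq_sub,
    norm_sub_rev, inner_neg_left, inner_neg_left, neg_sq, neg_sq, clExponent]

theorem clExponent_sub_clExponent_swap {n : E} (hn : ‖n‖ = 1) {rperp rpar : ℝ}
    (hrperp : rperp ≠ 0) (hrpar₀ : rpar ≠ 0) (hrpar₂ : rpar ≠ 2) (u v : E) :
    clExponent n rperp rpar u v - clExponent n rperp rpar v u = ‖v‖ ^ 2 - ‖u‖ ^ 2 := by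
  have hrpar : rpar * (2 - rpar) ≠ 0 := mul_ne_zero hrpar₀ (sub_ne_zero.mpr hrpar₂.symm)
  have tangential := norm_sub_smul_sq_sub_norm_sub_smul_sq
    (v - ⟪v, n⟫ • n) (u - ⟪u, n⟫ • n) (1 - rpar)
  rw [norm_sub_inner_smul_sq hn, norm_sub_inner_smul_sq hn] at tangential
  rw [clExponent, clExponent]
  field_simp
  linear_combination rperp * tangential

end InnerProductSpace

theorem clKernel_eq_exp_clExponent (n : EuclideanSpace ℝ (Fin 3)) (T rperp rpar : ℝ)
    (u v : EuclideanSpace ℝ (Fin 3)) :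
    clKernel n T rperp rpar u v =
      (2 / (Real.pi * rperp * rpar * (2 - rpar))) * (|⟪n, v⟫| / (2 * T) ^ 2) *
        Real.exp (-(1 / (2 * T)) * clExponent n rperp rpar u v) *
        besselI0 (Real.sqrt (1 - rperp) * ⟪v, n⟫ * ⟪u, n⟫ / (T * rperp)) :=
  rfl

theorem clKernel_reciprocity_general
    (n : EuclideanSpace ℝ (Fin 3)) (hn : ‖n‖ = 1)
    (T : ℝ)
    (rperp rpar : ℝ) (hrperp0 : 0 < rperp)
    (hrpar0 : 0 < rpar) (hrpar2 : rpar < 2)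
    (u v : EuclideanSpace ℝ (Fin 3))
    (hu : 0 < (inner ℝ u n : ℝ)) :
    clKernel n T rperp rpar u v =
      clKernel n T rperp rpar (-v) (-u) *
        Real.exp (-(‖v‖ ^ 2 - ‖u‖ ^ 2) / (2 * T)) *
        (|(inner ℝ n v : ℝ)| / |(inner ℝ n u : ℝ)|) := by
  have hexponent : -(1 / (2 * T)) * clExponent n rperp rpar u v =
      -(1 / (2 * T)) * clExponent n rperp rpar (-v) (-u) + -(‖v‖ ^ 2 - ‖u‖ ^ 2) / (2 * T) := by
    rw [clExponent_neg, ← clExponent_sub_clExponent_swap hn hrperp0.ne' hrpar0.ne' hrpar2.ne]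
    ring
  have hbessel : Real.sqrt (1 - rperp) * ⟪-u, n⟫ * ⟪-v, n⟫ / (T * rperp) =
      Real.sqrt (1 - rperp) * ⟪v, n⟫ * ⟪u, n⟫ / (T * rperp) := by
    rw [inner_neg_left, inner_neg_left]
    ring
  have hnu : |⟪n, u⟫| ≠ 0 := by rw [real_inner_comm]; exact (abs_pos_of_pos hu).ne'
  rw [clKernel_eq_exp_clExponent, clKernel_eq_exp_clExponent, hexponent, Real.exp_add, hbessel,
    inner_neg_right, abs_neg]
  field_simp

/-- Reciprocity of the Cercignani–Lampis kernel:
`R(u→v) = R(−v→−u) · exp(−(|v|²−|u|²)/(2T)) · |n·v|/|n·u|`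
for all `u` with `u ⬝ n > 0` and `v` with `v ⬝ n < 0`. -/
theorem clKernel_reciprocity
    (n : EuclideanSpace ℝ (Fin 3)) (hn : ‖n‖ = 1)
    (T : ℝ) (hT : 0 < T)
    (rperp rpar : ℝ) (hrperp0 : 0 < rperp) (hrperp1 : rperp ≤ 1)
    (hrpar0 : 0 < rpar) (hrpar2 : rpar < 2)
    (u v : EuclideanSpace ℝ (Fin 3))
    (hu : 0 < (inner ℝ u n : ℝ)) (hv : (inner ℝ v n : ℝ) < 0) :
    clKernel n T rperp rpar u v =
      clKernel n T rperp rpar (-v) (-u) *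
        Real.exp (-(‖v‖ ^ 2 - ‖u‖ ^ 2) / (2 * T)) *
        (|(inner ℝ n v : ℝ)| / |(inner ℝ n u : ℝ)|) :=
  clKernel_reciprocity_general n hn T rperp rpar hrperp0 hrpar0 hrpar2 u v hu
end

section
/- Let a, b, ε > 0 with a + ε < b. Then for every w ∈ ℝ² and every δ > 0: (b/π) ∫_{{v ∈ ℝ² : |v − (b/(b−a−ε))w| > 1/δ}} e^{ε|v|²} e^{a|v|²} e^{−b|v−w|²} dv ≤ e^{−(b−a−ε)/δ²} · (b/(b−a−ε)) · exp( ((a+ε)b/(b−a−ε)) |w|² ). -/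
/-!
Since `a + ε < b`, completing the square turns the integrand into a constant times the
Gaussian `exp (-(b - a - ε) ‖v - μ‖²)` centred at `μ = (b / (b - a - ε)) • w`, so the
integral is a Gaussian tail outside a disc around its centre. In polar coordinates that tail
is `π / c · exp (-c R²)` exactly, and the claimed bound even holds with equality.
-/

open MeasureTheory Set Real

lemma integral_Ioi_mul_exp_neg_mul_sq {c : ℝ} (hc : 0 < c) (R : ℝ) :
    ∫ y in Ioi R, y * exp (-c * y ^ 2) = exp (-c * R ^ 2) / (2 * c) := by
  have hderiv : ∀ y ∈ Ici R,
      HasDerivAt (fun y ↦ -exp (-c * y ^ 2) / (2 * c)) (y * exp (-c * y ^ 2)) y := by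
    intro y _
    refine ((((hasDerivAt_pow 2 y).const_mul (-c)).exp).neg.div_const (2 * c)).congr_deriv ?_
    field_simp
    ring
  have hlim : Filter.Tendsto (fun y ↦ -exp (-c * y ^ 2) / (2 * c)) Filter.atTop (nhds 0) := by
    have hexponent : Filter.Tendsto (fun y : ℝ ↦ -c * y ^ 2) Filter.atTop Filter.atBot :=
      (Filter.tendsto_pow_atTop two_ne_zero).const_mul_atTop_of_neg (neg_lt_zero.2 hc)
    simpa using ((tendsto_exp_atBot.comp hexponent).neg).div_const (2 * c)
  rw [integral_Ioi_of_hasDerivAt_of_tendsto' hderiv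
    (integrable_mul_exp_neg_mul_sq hc).integrableOn hlim]
  ring

lemma integral_exp_neg_mul_norm_sq_of_lt_norm {c R : ℝ} (hc : 0 < c) (hR : 0 ≤ R) :
    ∫ u in {u : EuclideanSpace ℝ (Fin 2) | R < ‖u‖}, exp (-c * ‖u‖ ^ 2)
      = π / c * exp (-c * R ^ 2) := by
  have hball : volume.real (Metric.ball (0 : EuclideanSpace ℝ (Fin 2)) 1) = π := by
    rw [measureReal_def, EuclideanSpace.volume_ball]
    norm_num [Real.Gamma_two, Real.sq_sqrt Real.pi_pos.le, ENNReal.toReal_ofReal Real.pi_pos.le]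
  have hradial :
      ∫ y in Ioi (0 : ℝ), y ^ (2 - 1) • (Ioi R).indicator (fun r ↦ exp (-c * r ^ 2)) y
        = ∫ y in Ioi R, y * exp (-c * y ^ 2) := by
    have hpt : ∀ y : ℝ, y ^ (2 - 1) • (Ioi R).indicator (fun r ↦ exp (-c * r ^ 2)) y
        = (Ioi R).indicator (fun r ↦ r * exp (-c * r ^ 2)) y := by
      intro y
      by_cases hy : y ∈ Ioi R <;> simp [hy]
    simp_rw [hpt]
    rw [integral_indicator measurableSet_Ioi, Measure.restrict_restrict measurableSet_Ioi,
      Ioi_inter_Ioi, max_eq_left hR]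
  calc ∫ u in {u : EuclideanSpace ℝ (Fin 2) | R < ‖u‖}, exp (-c * ‖u‖ ^ 2)
      = ∫ u : EuclideanSpace ℝ (Fin 2),
          (Ioi R).indicator (fun r ↦ exp (-c * r ^ 2)) ‖u‖ := by
        rw [← integral_indicator (isOpen_lt continuous_const continuous_norm).measurableSet]
        rfl
    _ = 2 • π • (exp (-c * R ^ 2) / (2 * c)) := by
        rw [integral_fun_norm_addHaar, finrank_euclideanSpace_fin, hball, hradial,
          integral_Ioi_mul_exp_neg_mul_sq hc]
    _ = π / c * exp (-c * R ^ 2) := by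
        simp only [nsmul_eq_mul, smul_eq_mul]
        field_simp
        ring

lemma integral_exp_neg_mul_norm_sub_sq_of_lt_norm_sub {c R : ℝ} (hc : 0 < c) (hR : 0 ≤ R)
    (x : EuclideanSpace ℝ (Fin 2)) :
    ∫ v in {v : EuclideanSpace ℝ (Fin 2) | R < ‖v - x‖}, exp (-c * ‖v - x‖ ^ 2)
      = π / c * exp (-c * R ^ 2) := by
  rw [← integral_exp_neg_mul_norm_sq_of_lt_norm hc hR]
  exact (measurePreserving_sub_right volume x).setIntegral_preimage_emb
    (Homeomorph.subRight x).measurableEmbedding (fun u ↦ exp (-c * ‖u‖ ^ 2)) {u | R < ‖u‖}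

lemma mul_norm_sq_sub_mul_norm_sub_sq {E : Type*} [NormedAddCommGroup E] [InnerProductSpace ℝ E]
    {s b : ℝ} (h : s ≠ b) (v w : E) :
    s * ‖v‖ ^ 2 - b * ‖v - w‖ ^ 2
      = s * b / (b - s) * ‖w‖ ^ 2 - (b - s) * ‖v - (b / (b - s)) • w‖ ^ 2 := by
  have h' : b - s ≠ 0 := sub_ne_zero.2 h.symm
  rw [norm_sub_sq_real, norm_sub_sq_real, inner_smul_right, norm_smul, mul_pow,
    Real.norm_eq_abs, sq_abs]
  field_simp
  ring

theorem gaussian_integral_plane_tail_general (a b ε : ℝ)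
    (hab : a + ε < b) (w : EuclideanSpace ℝ (Fin 2)) (δ : ℝ) (hδ : 0 < δ) :
    (b / Real.pi) * ∫ v in {v : EuclideanSpace ℝ (Fin 2) |
        1 / δ < ‖v - (b / (b - a - ε)) • w‖},
        Real.exp (ε * ‖v‖ ^ 2) * Real.exp (a * ‖v‖ ^ 2) * Real.exp (-b * ‖v - w‖ ^ 2)
      ≤ Real.exp (-(b - a - ε) / δ ^ 2) *
          ((b / (b - a - ε)) * Real.exp ((a + ε) * b / (b - a - ε) * ‖w‖ ^ 2)) := by
  have hintegrand : ∀ v : EuclideanSpace ℝ (Fin 2),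
      exp (ε * ‖v‖ ^ 2) * exp (a * ‖v‖ ^ 2) * exp (-b * ‖v - w‖ ^ 2)
        = exp ((a + ε) * b / (b - a - ε) * ‖w‖ ^ 2)
          * exp (-(b - a - ε) * ‖v - (b / (b - a - ε)) • w‖ ^ 2) := by
    intro v
    have hsquare := mul_norm_sq_sub_mul_norm_sub_sq hab.ne v w
    rw [sub_add_eq_sub_sub] at hsquare
    rw [← exp_add, ← exp_add, ← exp_add]
    congr 1
    linear_combination hsquare
  simp_rw [hintegrand]
  rw [integral_const_mul, integral_exp_neg_mul_norm_sub_sq_of_lt_norm_sub (by linarith)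
    (one_div_nonneg.2 hδ.le)]
  apply le_of_eq
  field_simp

/-- Gaussian tail estimate on `ℝ²`: for `a, b, ε > 0` with `a + ε < b`, any `w ∈ ℝ²`
and any `δ > 0`,
`(b/π) ∫_{|v − (b/(b−a−ε))w| > 1/δ} e^{ε|v|²} e^{a|v|²} e^{−b|v−w|²} dv
  ≤ e^{−(b−a−ε)/δ²} · (b/(b−a−ε)) · exp(((a+ε)b/(b−a−ε)) |w|²)`. -/
theorem gaussian_integral_plane_tail (a b ε : ℝ) (ha : 0 < a) (hb : 0 < b) (hε : 0 < ε)
    (hab : a + ε < b) (w : EuclideanSpace ℝ (Fin 2)) (δ : ℝ) (hδ : 0 < δ) :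
    (b / Real.pi) * ∫ v in {v : EuclideanSpace ℝ (Fin 2) |
        1 / δ < ‖v - (b / (b - a - ε)) • w‖},
        Real.exp (ε * ‖v‖ ^ 2) * Real.exp (a * ‖v‖ ^ 2) * Real.exp (-b * ‖v - w‖ ^ 2)
      ≤ Real.exp (-(b - a - ε) / δ ^ 2) *
          ((b / (b - a - ε)) * Real.exp ((a + ε) * b / (b - a - ε) * ‖w‖ ^ 2)) :=
  gaussian_integral_plane_tail_general a b ε hab w δ hδ
end

section
/- Let a, b, ε > 0 with a + ε < b. Then there exists δ₀ > 0 such that for every δ ∈ (0, δ₀] and every w ≥ 0: 2b ∫₀^δ v e^{ε v²} e^{a v²} e^{−b v²} e^{−b w²} I₀(2 b v w) dv ≤ δ · (b/(b−a−ε)) · exp( ((a+ε)b/(b−a−ε)) w² ). -/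
open MeasureTheory

/-!
Bounding `I₀(y) ≤ e^{|y|}` turns the integrand into `v` times a Gaussian in `(v, w)`, whose
exponent `-(b - a - ε) v² + 2bvw - bw²` is at most `(a + ε) b / (b - a - ε) · w²` after
completing the square in `v`. Hence the integral is at most `δ² / 2` times that exponential,
and `b δ² ≤ δ · b / (b - a - ε)` once `δ ≤ 1 / (b - a - ε)`.
-/

open Real

lemma besselI0_nonneg (y : ℝ) : 0 ≤ besselI0 y :=
  mul_nonneg (by positivity)
    (intervalIntegral.integral_nonneg pi_pos.le fun _ _ => (exp_pos _).le)

lemma besselI0_le_exp_abs (y : ℝ) : besselI0 y ≤ exp |y| := by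
  have hmono : ∫ φ in (0:ℝ)..π, exp (y * cos φ) ≤ ∫ _ in (0:ℝ)..π, exp |y| := by
    refine intervalIntegral.integral_mono_on pi_pos.le
      ((by fun_prop : Continuous fun φ => exp (y * cos φ)).intervalIntegrable _ _)
      intervalIntegrable_const fun φ _ => exp_le_exp.2 ?_
    calc y * cos φ ≤ |y * cos φ| := le_abs_self _
      _ = |y| * |cos φ| := abs_mul _ _
      _ ≤ |y| := mul_le_of_le_one_right (abs_nonneg y) (abs_cos_le_one φ)
  rw [intervalIntegral.integral_const, smul_eq_mul, sub_zero] at hmono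
  calc besselI0 y ≤ 1 / π * (π * exp |y|) := by
        unfold besselI0; gcongr
    _ = exp |y| := by field_simp

lemma quadratic_exponent_le {s b : ℝ} (h : s < b) (v w : ℝ) :
    s * v ^ 2 - b * v ^ 2 - b * w ^ 2 + 2 * b * v * w ≤ s * b / (b - s) * w ^ 2 := by
  have hc : 0 < b - s := sub_pos.2 h
  rw [div_mul_eq_mul_div, le_div_iff₀ hc]
  nlinarith [sq_nonneg ((b - s) * v - b * w)]

lemma gaussian_bessel_integrand_le {a b ε v w : ℝ} (hab : a + ε < b) (hb : 0 ≤ b)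
    (hv : 0 ≤ v) (hw : 0 ≤ w) :
    v * exp (ε * v ^ 2) * exp (a * v ^ 2) * exp (-b * v ^ 2) * exp (-b * w ^ 2) *
        besselI0 (2 * b * v * w)
      ≤ v * exp ((a + ε) * b / (b - a - ε) * w ^ 2) := by
  have hy : |2 * b * v * w| = 2 * b * v * w := abs_of_nonneg (by positivity)
  have hexp := quadratic_exponent_le hab v w
  rw [sub_add_eq_sub_sub] at hexp
  calc _ ≤ v * exp (ε * v ^ 2) * exp (a * v ^ 2) * exp (-b * v ^ 2) * exp (-b * w ^ 2) *
          exp (2 * b * v * w) := by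
        gcongr; simpa only [hy] using besselI0_le_exp_abs (2 * b * v * w)
    _ = v * exp (ε * v ^ 2 + a * v ^ 2 + -b * v ^ 2 + -b * w ^ 2 + 2 * b * v * w) := by
        simp only [exp_add]; ring
    _ ≤ _ := by gcongr; linarith

lemma setIntegral_gaussian_bessel_le {a b ε δ w : ℝ} (hab : a + ε < b) (hb : 0 ≤ b)
    (hδ : 0 ≤ δ) (hw : 0 ≤ w) :
    ∫ v in Set.Ioo (0:ℝ) δ,
        v * exp (ε * v ^ 2) * exp (a * v ^ 2) * exp (-b * v ^ 2) * exp (-b * w ^ 2) *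
          besselI0 (2 * b * v * w)
      ≤ δ ^ 2 / 2 * exp ((a + ε) * b / (b - a - ε) * w ^ 2) := by
  set E := exp ((a + ε) * b / (b - a - ε) * w ^ 2)
  have hlinear : ∫ v in Set.Ioo (0:ℝ) δ, v * E = δ ^ 2 / 2 * E := by
    rw [integral_mul_const, ← integral_Ioc_eq_integral_Ioo,
      ← intervalIntegral.integral_of_le hδ, integral_id]
    ring
  rw [← hlinear]
  refine integral_mono_of_nonneg ?_ ?_ ?_
  · filter_upwards [ae_restrict_mem measurableSet_Ioo] with v hv
    have hv0 := hv.1.le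
    exact mul_nonneg (by positivity) (besselI0_nonneg _)
  · exact (continuous_id.mul continuous_const).integrableOn_Icc.mono_set Set.Ioo_subset_Icc_self
  · filter_upwards [ae_restrict_mem measurableSet_Ioo] with v hv
    exact gaussian_bessel_integrand_le hab hb hv.1.le hw

theorem gaussian_bessel_integral_small_general (a b ε : ℝ) (hb : 0 < b)
    (hab : a + ε < b) :
    ∃ δ₀ > 0, ∀ δ : ℝ, 0 < δ → δ ≤ δ₀ → ∀ w : ℝ, 0 ≤ w →
      2 * b * ∫ v in Set.Ioo (0:ℝ) δ,
          v * Real.exp (ε * v ^ 2) * Real.exp (a * v ^ 2) * Real.exp (-b * v ^ 2) *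
            Real.exp (-b * w ^ 2) * besselI0 (2 * b * v * w)
        ≤ δ * ((b / (b - a - ε)) * Real.exp ((a + ε) * b / (b - a - ε) * w ^ 2)) := by
  have hc : 0 < b - a - ε := by linarith
  refine ⟨1 / (b - a - ε), by positivity, fun δ hδ hδ₀ w hw => ?_⟩
  set E := exp ((a + ε) * b / (b - a - ε) * w ^ 2)
  have hδc : δ * (b - a - ε) ≤ 1 := (le_div_iff₀ hc).1 hδ₀
  calc _ ≤ 2 * b * (δ ^ 2 / 2 * E) := by
        gcongr; exact setIntegral_gaussian_bessel_le hab hb.le hδ.le hw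
    _ = δ * (b * E) * (δ * (b - a - ε)) / (b - a - ε) := by field_simp
    _ ≤ δ * (b * E) * 1 / (b - a - ε) := by gcongr
    _ = _ := by ring

/-- Smallness of the Gaussian–Bessel integral near the origin: for `a, b, ε > 0` with
`a + ε < b` there exists `δ₀ > 0` such that for all `0 < δ ≤ δ₀` and all `w ≥ 0`,
`2b ∫₀^δ v e^{εv²} e^{av²} e^{−bv²} e^{−bw²} I₀(2bvw) dv
  ≤ δ · (b/(b−a−ε)) · exp(((a+ε)b/(b−a−ε)) w²)`. -/
theorem gaussian_bessel_integral_small (a b ε : ℝ) (ha : 0 < a) (hb : 0 < b) (hε : 0 < ε)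
    (hab : a + ε < b) :
    ∃ δ₀ > 0, ∀ δ : ℝ, 0 < δ → δ ≤ δ₀ → ∀ w : ℝ, 0 ≤ w →
      2 * b * ∫ v in Set.Ioo (0:ℝ) δ,
          v * Real.exp (ε * v ^ 2) * Real.exp (a * v ^ 2) * Real.exp (-b * v ^ 2) *
            Real.exp (-b * w ^ 2) * besselI0 (2 * b * v * w)
        ≤ δ * ((b / (b - a - ε)) * Real.exp ((a + ε) * b / (b - a - ε) * w ^ 2)) :=
  gaussian_bessel_integral_small_general a b ε hb hab
end

section
/- Let ρ > 0, θ > 0 and ρ̃ > 0 satisfy θ ≤ 2(ρ − ρ̃). Then there exists a constant C > 0 such that for every σ ∈ [0, θ] and all u, v ∈ ℝ³ with u ≠ v: k_ρ(v,u) · e^{θ|v|² − θ|u|²} · e^{σ(⟨u⟩ − ⟨v⟩)} ≤ C · k_ρ̃(v,u). -/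
/-! With `P = ⟨u⟩`, `Q = ⟨v⟩` the weighted exponent factors as
`θ(Q² − P²) − σ(Q − P) = (Q − P)(θ(P + Q) − σ)`, and the second factor lies in `[0, θ(P + Q)]`
because `P + Q ≥ 2` and `σ ≤ θ`; so the weight costs at most `θ|d|`, `d = |v|² − |u|²`. By AM–GM,
`2|d| ≤ |v − u|² + d²/|v − u|²`, hence `θ ≤ 2(ρ − ρ̃)` lets the surplus `ρ − ρ̃` of the Gaussian
factor absorb it, with `C = 1`. -/

noncomputable def kker (ρ : ℝ) (v u : EuclideanSpace ℝ (Fin 3)) : ℝ :=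
  ‖v - u‖⁻¹ * Real.exp (-ρ * ‖v - u‖ ^ 2 - ρ * (‖v‖ ^ 2 - ‖u‖ ^ 2) ^ 2 / ‖v - u‖ ^ 2)

lemma two_mul_abs_le_add_sq_div {a : ℝ} (ha : 0 < a) (d : ℝ) : 2 * |d| ≤ a + d ^ 2 / a := by
  have h : a + d ^ 2 / a - 2 * |d| = (a - |d|) ^ 2 / a := by
    field_simp
    rw [← sq_abs d]
    ring
  linarith [div_nonneg (sq_nonneg (a - |d|)) ha.le]

lemma mul_sq_sub_sq_add_mul_sqrt_sub_le {θ σ : ℝ} (hσ : 0 ≤ σ) (hσθ : σ ≤ θ) (x y : ℝ) :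
    θ * (y ^ 2 - x ^ 2) + σ * (√(1 + x ^ 2) - √(1 + y ^ 2)) ≤ θ * |y ^ 2 - x ^ 2| := by
  set P := √(1 + x ^ 2)
  set Q := √(1 + y ^ 2)
  have hP : P ^ 2 = 1 + x ^ 2 := Real.sq_sqrt (by positivity)
  have hQ : Q ^ 2 = 1 + y ^ 2 := Real.sq_sqrt (by positivity)
  have hP1 : 1 ≤ P := Real.one_le_sqrt.mpr (by nlinarith)
  have hQ1 : 1 ≤ Q := Real.one_le_sqrt.mpr (by nlinarith)
  have hdiff : y ^ 2 - x ^ 2 = (Q - P) * (P + Q) := by nlinarith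
  have hfactor_nonneg : 0 ≤ θ * (P + Q) - σ := by nlinarith
  calc θ * (y ^ 2 - x ^ 2) + σ * (P - Q) = (Q - P) * (θ * (P + Q) - σ) := by rw [hdiff]; ring
    _ ≤ |Q - P| * (θ * (P + Q) - σ) := by gcongr; exact le_abs_self _
    _ ≤ |Q - P| * (θ * (P + Q)) := by gcongr; linarith
    _ = θ * |y ^ 2 - x ^ 2| := by
      rw [hdiff, abs_mul, abs_of_pos (by linarith : 0 < P + Q)]; ring

lemma kker_mul_exp_le_kker {ρ ρt s : ℝ} {u v : EuclideanSpace ℝ (Fin 3)}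
    (hs : s ≤ (ρ - ρt) * (‖v - u‖ ^ 2 + (‖v‖ ^ 2 - ‖u‖ ^ 2) ^ 2 / ‖v - u‖ ^ 2)) :
    kker ρ v u * Real.exp s ≤ kker ρt v u := by
  unfold kker
  rw [mul_assoc, ← Real.exp_add]
  gcongr
  simp only [mul_div_assoc] at hs ⊢
  linarith

theorem kker_weighted_comparison_general (ρ θ ρt : ℝ)
    (hcond : θ ≤ 2 * (ρ - ρt)) :
    ∃ C > 0, ∀ σ ∈ Set.Icc (0:ℝ) θ, ∀ u v : EuclideanSpace ℝ (Fin 3), u ≠ v →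
      kker ρ v u * Real.exp (θ * ‖v‖ ^ 2 - θ * ‖u‖ ^ 2) *
          Real.exp (σ * (Real.sqrt (1 + ‖u‖ ^ 2) - Real.sqrt (1 + ‖v‖ ^ 2)))
        ≤ C * kker ρt v u := by
  refine ⟨1, one_pos, fun σ ⟨hσ, hσθ⟩ u v huv => ?_⟩
  have ha : 0 < ‖v - u‖ ^ 2 := by
    have := norm_pos_iff.mpr (sub_ne_zero.mpr huv.symm)
    positivity
  have hweight := mul_sq_sub_sq_add_mul_sqrt_sub_le hσ hσθ ‖u‖ ‖v‖
  have hamgm := two_mul_abs_le_add_sq_div ha (‖v‖ ^ 2 - ‖u‖ ^ 2)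
  rw [one_mul, mul_assoc, ← Real.exp_add]
  apply kker_mul_exp_le_kker
  nlinarith [abs_nonneg (‖v‖ ^ 2 - ‖u‖ ^ 2)]

/-- Weighted kernel comparison: if `ρ, θ, ρ̃ > 0` satisfy `θ ≤ 2(ρ − ρ̃)`, there is a
constant `C > 0` such that for all `σ ∈ [0, θ]` and all `u ≠ v` in `ℝ³`,
`k_ρ(v,u) e^{θ|v|²−θ|u|²} e^{σ(⟨u⟩−⟨v⟩)} ≤ C k_ρ̃(v,u)`, where `⟨v⟩ = √(1+|v|²)`. -/
theorem kker_weighted_comparison (ρ θ ρt : ℝ) (hρ : 0 < ρ) (hθ : 0 < θ) (hρt : 0 < ρt)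
    (hcond : θ ≤ 2 * (ρ - ρt)) :
    ∃ C > 0, ∀ σ ∈ Set.Icc (0:ℝ) θ, ∀ u v : EuclideanSpace ℝ (Fin 3), u ≠ v →
      kker ρ v u * Real.exp (θ * ‖v‖ ^ 2 - θ * ‖u‖ ^ 2) *
          Real.exp (σ * (Real.sqrt (1 + ‖u‖ ^ 2) - Real.sqrt (1 + ‖v‖ ^ 2)))
        ≤ C * kker ρt v u :=
  kker_weighted_comparison_general ρ θ ρt hcond
end

section
/- For every ρ > 0 there exists a constant C > 0 such that for all v ∈ ℝ³: ∫_{ℝ³} k_ρ(v,u) du ≤ C · ⟨v⟩^{-1}. -/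
open MeasureTheory

/-!
With `w = u - v` one has `|v|² - |u|² = -(|w|² + 2⟪v, w⟫)`, and an elementary inequality bounds
the exponent of `k_ρ(v, u)` by `-(ρ/4)|w|² - ρ|⟪v, w⟫|`. A rotation taking `v` to `|v| e₀` turns the
integral of this majorant into that of `|x|⁻¹ exp(-(ρ/4)|x|² - ρ|v||x₀|)`. Since
`|x|⁻¹ ≤ |x₁|^(-1/2) |x₂|^(-1/2)`, this is at most a product of three one-dimensional integrals,
and the one in `x₀` is bounded both by the Gaussian integral and by `2/(ρ|v|)`, which gives the
decay `⟨v⟩⁻¹`.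
-/

open Real Set
open scoped RealInnerProductSpace

theorem exists_linearIsometryEquiv_inner_map_eq {E : Type*} [NormedAddCommGroup E]
    [InnerProductSpace ℝ E] (v : E) {e : E} (he : ‖e‖ = 1) :
    ∃ T : E ≃ₗᵢ[ℝ] E, ∀ x, ⟪v, T x⟫ = ‖v‖ * ⟪e, x⟫ := by
  rcases eq_or_ne v 0 with rfl | hv
  · exact ⟨LinearIsometryEquiv.refl ℝ E, fun x => by simp⟩
  set T := (ℝ ∙ (e - ‖v‖⁻¹ • v))ᗮ.reflection
  have hTe : T e = ‖v‖⁻¹ • v := Submodule.reflection_sub <| by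
    rw [he, norm_smul, norm_inv, norm_norm, inv_mul_cancel₀ (norm_ne_zero_iff.2 hv)]
  refine ⟨T, fun x => ?_⟩
  calc ⟪v, T x⟫ = ⟪‖v‖ • T e, T x⟫ := by
        rw [hTe, smul_inv_smul₀ (norm_ne_zero_iff.2 hv)]
    _ = ‖v‖ * ⟪e, x⟫ := by rw [real_inner_smul_left, LinearIsometryEquiv.inner_map_map]

namespace EuclideanSpace

variable {ι : Type*} [Fintype ι]

theorem exists_linearIsometryEquiv_inner_map_eq_mul_apply (v : EuclideanSpace ℝ ι) (i : ι) :
    ∃ T : EuclideanSpace ℝ ι ≃ₗᵢ[ℝ] EuclideanSpace ℝ ι, ∀ x, ⟪v, T x⟫ = ‖v‖ * x i := by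
  classical
  obtain ⟨T, hT⟩ := _root_.exists_linearIsometryEquiv_inner_map_eq v
    (e := EuclideanSpace.single i 1) (by simp)
  exact ⟨T, fun x => by simp [hT, EuclideanSpace.inner_single_left]⟩

variable {F : Type*} [NormedAddCommGroup F]

theorem integrable_comp_inner_norm_iff (g : ℝ → ℝ → F) (v : EuclideanSpace ℝ ι) (i : ι) :
    Integrable (fun w => g ⟪v, w⟫ ‖w‖) ↔
      Integrable (fun x : EuclideanSpace ℝ ι => g (‖v‖ * x i) ‖x‖) := by
  obtain ⟨T, hT⟩ := exists_linearIsometryEquiv_inner_map_eq_mul_apply v i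
  rw [← T.measurePreserving.integrable_comp_emb T.toHomeomorph.measurableEmbedding]
  simp [Function.comp_def, hT]

theorem integral_comp_inner_norm [NormedSpace ℝ F] (g : ℝ → ℝ → F) (v : EuclideanSpace ℝ ι)
    (i : ι) :
    ∫ w, g ⟪v, w⟫ ‖w‖ = ∫ x : EuclideanSpace ℝ ι, g (‖v‖ * x i) ‖x‖ := by
  obtain ⟨T, hT⟩ := exists_linearIsometryEquiv_inner_map_eq_mul_apply v i
  rw [← T.measurePreserving.integral_comp T.toHomeomorph.measurableEmbedding]
  simp [hT]

theorem ae_apply_ne (i : ι) (c : ℝ) : ∀ᵐ x : EuclideanSpace ℝ ι, x i ≠ c := by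
  have : ∀ᵐ y : ι → ℝ, y i ≠ c := by
    rw [ae_iff]
    simpa [volume_pi] using Measure.pi_hyperplane (α := fun _ => ℝ) (fun _ => volume) i c
  exact (PiLp.volume_preserving_ofLp ι).quasiMeasurePreserving.ae this

variable {𝕜 : Type*} [RCLike 𝕜]

theorem integrable_fintype_prod {f : ι → ℝ → 𝕜} (hf : ∀ i, Integrable (f i)) :
    Integrable fun x : EuclideanSpace ℝ ι => ∏ i, f i (x i) :=
  ((PiLp.volume_preserving_ofLp ι).integrable_comp_emb
    (MeasurableEquiv.toLp 2 (ι → ℝ)).symm.measurableEmbedding).2 (Integrable.fintype_prod hf)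

theorem integral_fintype_prod_eq_prod_s12 (f : ι → ℝ → 𝕜) :
    ∫ x : EuclideanSpace ℝ ι, ∏ i, f i (x i) = ∏ i, ∫ t, f i t := by
  rw [← integral_fintype_prod_volume_eq_prod f,
    ← (EuclideanSpace.volume_preserving_symm_measurableEquiv_toLp ι).integral_comp']
  rfl

theorem inv_norm_le_rpow_mul_rpow {x : EuclideanSpace ℝ ι} {i j : ι} (hi : x i ≠ 0)
    (hj : x j ≠ 0) : ‖x‖⁻¹ ≤ |x i| ^ (-(1 / 2 : ℝ)) * |x j| ^ (-(1 / 2 : ℝ)) := by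
  have hxi : 0 < |x i| := abs_pos.2 hi
  have hx : 0 < ‖x‖ := hxi.trans_le (PiLp.norm_apply_le x i)
  rw [← Real.mul_rpow hxi.le (abs_nonneg _), ← Real.rpow_neg_one,
    show (-1 : ℝ) = 2 * -(1 / 2) by norm_num, Real.rpow_mul hx.le, Real.rpow_two]
  exact Real.rpow_le_rpow_of_nonpos (by positivity)
    (sq ‖x‖ ▸ mul_le_mul (PiLp.norm_apply_le x i) (PiLp.norm_apply_le x j) (abs_nonneg _)
      hx.le) (by norm_num)

end EuclideanSpace

theorem integrable_comp_abs_of_integrableOn_Ioi {E : Type*} [NormedAddCommGroup E] {f : ℝ → E}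
    (hf : IntegrableOn f (Ioi 0)) : Integrable fun t => f |t| := by
  have hIoi : IntegrableOn (fun t => f |t|) (Ioi 0) :=
    hf.congr_fun (fun t ht => by rw [abs_of_pos ht]) measurableSet_Ioi
  rw [← integrableOn_univ, ← Iic_union_Ioi (a := (0 : ℝ)), integrableOn_union]
  refine ⟨?_, hIoi⟩
  have hneg : MeasurableEmbedding fun t : ℝ => -t := (Homeomorph.neg ℝ).measurableEmbedding
  rw [← Measure.map_neg_eq_self (volume : Measure ℝ), hneg.integrableOn_map_iff]
  simp_rw [Function.comp_def, abs_neg, neg_preimage, neg_Iic, neg_zero]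
  exact Iff.mpr integrableOn_Ici_iff_integrableOn_Ioi hIoi

noncomputable def dampedGaussian (b c t : ℝ) : ℝ := exp (-b * t ^ 2 - c * |t|)

noncomputable def singularGaussian (b t : ℝ) : ℝ := |t| ^ (-(1 / 2 : ℝ)) * exp (-b * t ^ 2)

section Gaussian

variable {b c : ℝ}

theorem dampedGaussian_le_gaussian (hc : 0 ≤ c) (t : ℝ) :
    dampedGaussian b c t ≤ exp (-b * t ^ 2) :=
  exp_le_exp.2 (by nlinarith [abs_nonneg t])

theorem integrable_dampedGaussian (hb : 0 < b) (hc : 0 ≤ c) : Integrable (dampedGaussian b c) :=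
  (integrable_exp_neg_mul_sq hb).mono' (by unfold dampedGaussian; fun_prop)
    (.of_forall fun t =>
      (norm_of_nonneg (exp_pos _).le).trans_le (dampedGaussian_le_gaussian hc t))

theorem integral_dampedGaussian_le (hb : 0 < b) (hc : 0 ≤ c) :
    ∫ t, dampedGaussian b c t ≤ √(π / b) :=
  integral_gaussian b ▸ integral_mono (integrable_dampedGaussian hb hc)
    (integrable_exp_neg_mul_sq hb) (dampedGaussian_le_gaussian hc)

theorem mul_integral_dampedGaussian_le (hb : 0 ≤ b) (hc : 0 ≤ c) :
    c * ∫ t, dampedGaussian b c t ≤ 2 := by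
  rcases hc.eq_or_lt with rfl | hc
  · simp
  have hexp : ∫ t in Ioi 0, exp (-c * t) = c⁻¹ := by
    simpa using integral_exp_mul_Ioi (neg_neg_of_pos hc) 0
  have hle : ∫ t in Ioi 0, exp (-b * t ^ 2 - c * t) ≤ ∫ t in Ioi 0, exp (-c * t) :=
    integral_mono_of_nonneg (.of_forall fun t => (exp_pos _).le) (exp_neg_integrableOn_Ioi 0 hc)
      (.of_forall fun t => exp_le_exp.2 (by nlinarith [sq_nonneg t]))
  have heven : ∫ t, dampedGaussian b c t = 2 * ∫ t in Ioi 0, exp (-b * t ^ 2 - c * t) := by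
    rw [← integral_comp_abs (f := fun t => exp (-b * t ^ 2 - c * t))]
    simp only [dampedGaussian, sq_abs]
  calc c * ∫ t, dampedGaussian b c t = c * (2 * ∫ t in Ioi 0, exp (-b * t ^ 2 - c * t)) := by
        rw [heven]
    _ ≤ c * (2 * c⁻¹) := by rw [← hexp]; gcongr
    _ = 2 := by field_simp

theorem integrable_singularGaussian (hb : 0 < b) : Integrable (singularGaussian b) := by
  unfold singularGaussian
  simpa only [sq_abs] using integrable_comp_abs_of_integrableOn_Ioi
    (integrableOn_rpow_mul_exp_neg_mul_sq hb (s := -(1 / 2)) (by norm_num))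

theorem integral_dampedGaussian_le_mul_inv_sqrt (hb : 0 < b) {l a : ℝ} (hl : 0 < l) (ha : 0 ≤ a) :
    ∫ t, dampedGaussian b (l * a) t ≤ (√(π / b) + 2 / l) * (√(1 + a ^ 2))⁻¹ := by
  set I := ∫ t, dampedGaussian b (l * a) t
  have hI : 0 ≤ I := integral_nonneg fun t => (exp_pos _).le
  have hdecay : a * I ≤ 2 / l := by
    rw [le_div_iff₀ hl]
    linarith [mul_integral_dampedGaussian_le hb.le (mul_nonneg hl.le ha)]
  have hsqrt : √(1 + a ^ 2) ≤ 1 + a :=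
    sqrt_le_iff.2 ⟨by positivity, by nlinarith⟩
  rw [← div_eq_mul_inv, le_div_iff₀ (by positivity)]
  calc I * √(1 + a ^ 2) ≤ I * (1 + a) := by gcongr
    _ = I + a * I := by ring
    _ ≤ _ := add_le_add (integral_dampedGaussian_le hb (mul_nonneg hl.le ha)) hdecay

end Gaussian

section Kernel

local notation "ℝ³" => EuclideanSpace ℝ (Fin 3)

theorem quarter_sq_add_abs_le {r : ℝ} (hr : 0 < r) (s : ℝ) :
    r ^ 2 / 4 + |s| ≤ r ^ 2 + (r ^ 2 + 2 * s) ^ 2 / r ^ 2 := by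
  have hr2 : 0 < r ^ 2 := by positivity
  rw [← sub_le_iff_le_add', le_div_iff₀ hr2]
  cases abs_cases s <;> nlinarith [sq_nonneg (8 * s + 5 * r ^ 2)]

noncomputable def kkerMajorant (b c s r : ℝ) : ℝ := r⁻¹ * exp (-b * r ^ 2 - c * |s|)

theorem kkerMajorant_nonneg (b c s : ℝ) {r : ℝ} (hr : 0 ≤ r) : 0 ≤ kkerMajorant b c s r := by
  unfold kkerMajorant; positivity

theorem kker_le_kkerMajorant {ρ : ℝ} (hρ : 0 ≤ ρ) (v u : ℝ³) :
    kker ρ v u ≤ kkerMajorant (ρ / 4) ρ ⟪v, u - v⟫ ‖u - v‖ := by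
  rcases eq_or_ne u v with rfl | huv
  · simp [kker, kkerMajorant]
  have hr : 0 < ‖u - v‖ := norm_pos_iff.2 (sub_ne_zero.2 huv)
  have hsq : ‖v‖ ^ 2 - ‖u‖ ^ 2 = -(‖u - v‖ ^ 2 + 2 * ⟪v, u - v⟫) := by
    rw [← add_sub_cancel v u, norm_add_sq_real, add_sub_cancel_left]
    ring
  have key := mul_le_mul_of_nonneg_left (quarter_sq_add_abs_le hr ⟪v, u - v⟫) hρ
  unfold kker kkerMajorant
  rw [norm_sub_rev v u, hsq, neg_sq, mul_div_assoc]
  gcongr ‖u - v‖⁻¹ * exp ?_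
  linarith

theorem kkerMajorant_le_mul_mul {b c a : ℝ} (ha : 0 ≤ a) {x : ℝ³} (h1 : x 1 ≠ 0) (h2 : x 2 ≠ 0) :
    kkerMajorant b c (a * x 0) ‖x‖ ≤
      dampedGaussian b (c * a) (x 0) * singularGaussian b (x 1) * singularGaussian b (x 2) := by
  have hnorm : ‖x‖ ^ 2 = x 0 ^ 2 + x 1 ^ 2 + x 2 ^ 2 := by
    simp [EuclideanSpace.norm_sq_eq, Fin.sum_univ_three]
  have hexp : exp (-b * ‖x‖ ^ 2 - c * |a * x 0|) =
      dampedGaussian b (c * a) (x 0) * exp (-b * x 1 ^ 2) * exp (-b * x 2 ^ 2) := by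
    rw [dampedGaussian, ← exp_add, ← exp_add, hnorm, abs_mul, abs_of_nonneg ha]
    ring_nf
  calc kkerMajorant b c (a * x 0) ‖x‖
      = ‖x‖⁻¹ * (dampedGaussian b (c * a) (x 0) * exp (-b * x 1 ^ 2) * exp (-b * x 2 ^ 2)) := by
        rw [kkerMajorant, hexp]
    _ ≤ (|x 1| ^ (-(1 / 2 : ℝ)) * |x 2| ^ (-(1 / 2 : ℝ))) *
          (dampedGaussian b (c * a) (x 0) * exp (-b * x 1 ^ 2) * exp (-b * x 2 ^ 2)) :=
        mul_le_mul_of_nonneg_right (EuclideanSpace.inv_norm_le_rpow_mul_rpow h1 h2)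
          (by unfold dampedGaussian; positivity)
    _ = _ := by unfold singularGaussian; ring

theorem integrable_mul_mul_apply {f g h : ℝ → ℝ} (hf : Integrable f) (hg : Integrable g)
    (hh : Integrable h) : Integrable fun x : ℝ³ => f (x 0) * g (x 1) * h (x 2) := by
  simpa [Fin.prod_univ_three, mul_assoc] using
    EuclideanSpace.integrable_fintype_prod (f := ![f, g, h])
      (by simp [Fin.forall_fin_succ, hf, hg, hh])

theorem integral_mul_mul_apply (f g h : ℝ → ℝ) :
    ∫ x : ℝ³, f (x 0) * g (x 1) * h (x 2) = (∫ t, f t) * (∫ t, g t) * ∫ t, h t := by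
  simpa [Fin.prod_univ_three, mul_assoc] using
    EuclideanSpace.integral_fintype_prod_eq_prod_s12 ![f, g, h]

variable {b c a : ℝ}

theorem integrable_kkerMajorant_mul_apply (hb : 0 < b) (hc : 0 ≤ c) (ha : 0 ≤ a) :
    Integrable fun x : ℝ³ => kkerMajorant b c (a * x 0) ‖x‖ := by
  refine (integrable_mul_mul_apply (integrable_dampedGaussian hb (mul_nonneg hc ha))
    (integrable_singularGaussian hb) (integrable_singularGaussian hb)).mono'
    (by unfold kkerMajorant; fun_prop) ?_
  filter_upwards [EuclideanSpace.ae_apply_ne 1 0, EuclideanSpace.ae_apply_ne 2 0] with x h1 h2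
  rw [norm_of_nonneg (kkerMajorant_nonneg _ _ _ (norm_nonneg x))]
  exact kkerMajorant_le_mul_mul ha h1 h2

theorem integral_kkerMajorant_mul_apply_le (hb : 0 < b) (hc : 0 ≤ c) (ha : 0 ≤ a) :
    ∫ x : ℝ³, kkerMajorant b c (a * x 0) ‖x‖ ≤
      (∫ t, dampedGaussian b (c * a) t) * (∫ t, singularGaussian b t) *
        ∫ t, singularGaussian b t := by
  rw [← integral_mul_mul_apply]
  refine integral_mono_of_nonneg (.of_forall fun x => kkerMajorant_nonneg _ _ _ (norm_nonneg x))
    (integrable_mul_mul_apply (integrable_dampedGaussian hb (mul_nonneg hc ha))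
      (integrable_singularGaussian hb) (integrable_singularGaussian hb)) ?_
  filter_upwards [EuclideanSpace.ae_apply_ne 1 0, EuclideanSpace.ae_apply_ne 2 0] with x h1 h2
  exact kkerMajorant_le_mul_mul ha h1 h2

end Kernel

/-- Integral decay of the kernel: for every `ρ > 0` there is `C > 0` such that
`∫_{ℝ³} k_ρ(v,u) du ≤ C ⟨v⟩⁻¹` for all `v`, where `⟨v⟩ = √(1+|v|²)`. -/
theorem kker_integral_le (ρ : ℝ) (hρ : 0 < ρ) :
    ∃ C > 0, ∀ v : EuclideanSpace ℝ (Fin 3),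
      ∫ u, kker ρ v u ≤ C * (Real.sqrt (1 + ‖v‖ ^ 2))⁻¹ := by
  set A := ∫ t, singularGaussian (ρ / 4) t
  set D := √(π / (ρ / 4)) + 2 / ρ
  have hA : 0 ≤ A := integral_nonneg fun t => by unfold singularGaussian; positivity
  refine ⟨D * A ^ 2 + 1, by positivity, fun v => ?_⟩
  set M := kkerMajorant (ρ / 4) ρ
  have hMint : Integrable fun u => M ⟪v, u - v⟫ ‖u - v‖ :=
    ((EuclideanSpace.integrable_comp_inner_norm_iff M v 0).2
      (integrable_kkerMajorant_mul_apply (by positivity) hρ.le (norm_nonneg v))).comp_sub_right v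
  calc ∫ u, kker ρ v u ≤ ∫ u, M ⟪v, u - v⟫ ‖u - v‖ :=
        integral_mono_of_nonneg (.of_forall fun u => by unfold kker; positivity) hMint
          (.of_forall (kker_le_kkerMajorant hρ.le v))
    _ = ∫ x : EuclideanSpace ℝ (Fin 3), M (‖v‖ * x 0) ‖x‖ := by
        rw [integral_sub_right_eq_self (fun w => M ⟪v, w⟫ ‖w‖) v,
          EuclideanSpace.integral_comp_inner_norm]
    _ ≤ (∫ t, dampedGaussian (ρ / 4) (ρ * ‖v‖) t) * A * A :=
        integral_kkerMajorant_mul_apply_le (by positivity) hρ.le (norm_nonneg v)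
    _ ≤ D * (√(1 + ‖v‖ ^ 2))⁻¹ * A * A := by
        gcongr
        exact integral_dampedGaussian_le_mul_inv_sqrt (by positivity) hρ (norm_nonneg v)
    _ ≤ (D * A ^ 2 + 1) * (√(1 + ‖v‖ ^ 2))⁻¹ := by
        have : 0 ≤ (√(1 + ‖v‖ ^ 2))⁻¹ := by positivity
        nlinarith
end
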